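/- For all 𝔍, 𝔍' ∈ 𝒫₊, the adjoint of a basis element satisfies (Θ(C_𝔍) ∘ C_{𝔍'})* = q_𝔍·q_{𝔍'}·Θ(C_𝔍) ∘ C_{𝔍'}. -/

import Mathlib

open ComplexOrder

noncomputable section

/-- The setting of the paper: a finite set `Λ` with a fixed-point free involution `ϑ`
exchanging `Λp` and its complement, the Clifford algebra (algebra of Majoranas) `carrier`
with self-adjoint generators `c i`, the global gauge automorphism `gauge`, the antilinear
reflection `*`-automorphism `Θ`, a square root `ζ` of `-1`, the twisted product `twist`,
a choice `P` of orderings of the subsets of `Λp` (giving the bases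
`{C J : J ∈ P}` of `𝔄₊` and `{Θ(C J) ∘ C J' : J, J' ∈ P}` of `𝔄`),
and the tracial state `Tr` picking out the coefficient of `1` in the basis expansion. -/
structure MajoranaSetting where
  Λ : Type
  [fintypeΛ : Fintype Λ]
  [deceqΛ : DecidableEq Λ]
  ϑ : Λ → Λ
  ϑ_invol : Function.Involutive ϑ
  ϑ_fixfree : ∀ i, ϑ i ≠ i
  Λp : Finset Λ
  ϑ_exch : ∀ i, i ∈ Λp ↔ ϑ i ∉ Λp
  carrier : Type
  [nring : NormedRing carrier]
  [nalg : NormedAlgebra ℂ carrier]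
  [cmpl : CompleteSpace carrier]
  [starring : StarRing carrier]
  [starmod : StarModule ℂ carrier]
  c : Λ → carrier
  c_star : ∀ i, star (c i) = c i
  clifford : ∀ i j, c i * c j + c j * c i = if i = j then (2 : carrier) else 0
  gauge : carrier ≃ₐ[ℂ] carrier
  gauge_c : ∀ i, gauge (c i) = - c i
  Θ : carrier → carrier
  Θ_add : ∀ x y, Θ (x + y) = Θ x + Θ y
  Θ_smul : ∀ (z : ℂ) (x), Θ (z • x) = (starRingEnd ℂ z) • Θ x
  Θ_mul : ∀ x y, Θ (x * y) = Θ x * Θ y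
  Θ_star : ∀ x, Θ (star x) = star (Θ x)
  Θ_invol : ∀ x, Θ (Θ x) = x
  Θ_c : ∀ i, Θ (c i) = c (ϑ i)
  ζ : ℂ
  ζ_sq : ζ ^ 2 = -1
  twist : carrier → carrier → carrier
  twist_add_left : ∀ x x' y, twist (x + x') y = twist x y + twist x' y
  twist_add_right : ∀ x y y', twist x (y + y') = twist x y + twist x y'
  twist_smul_left : ∀ (z : ℂ) (x y), twist (z • x) y = z • twist x y
  twist_smul_right : ∀ (z : ℂ) (x y), twist x (z • y) = z • twist x y
  twist_spec : ∀ (Am Ap Bm Bp : carrier) (a b a' b' : ℕ),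
    a ≤ 1 → b ≤ 1 → a' ≤ 1 → b' ≤ 1 →
    Am ∈ Algebra.adjoin ℂ (c '' {i | i ∉ Λp}) →
    Ap ∈ Algebra.adjoin ℂ (c '' {i | i ∈ Λp}) →
    Bm ∈ Algebra.adjoin ℂ (c '' {i | i ∉ Λp}) →
    Bp ∈ Algebra.adjoin ℂ (c '' {i | i ∈ Λp}) →
    gauge Am = ((-1 : ℂ) ^ a) • Am →
    gauge Ap = ((-1 : ℂ) ^ b) • Ap →
    gauge Bm = ((-1 : ℂ) ^ a') • Bm →
    gauge Bp = ((-1 : ℂ) ^ b') • Bp →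
    twist (Am * Ap) (Bm * Bp)
      = ζ ^ ((a * b' : ℤ) - (b * a' : ℤ)) • (Am * Ap * (Bm * Bp))
  P : Finset (List Λ)
  P_nodup : ∀ J ∈ P, J.Nodup
  P_sub : ∀ J ∈ P, ∀ i ∈ J, i ∈ Λp
  P_unique : ∀ s : Finset Λ, s ⊆ Λp → ∃! J, J ∈ P ∧ J.toFinset = s
  Tr : carrier →ₗ[ℂ] ℂ
  Tr_basis : ∀ J ∈ P, ∀ J' ∈ P,
    Tr (twist (Θ ((J.map c).prod)) ((J'.map c).prod))
      = if J = [] ∧ J' = [] then 1 else 0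
  basis_indep : LinearIndependent ℂ
    (fun p : {J // J ∈ P} × {J // J ∈ P} =>
      twist (Θ ((p.1.1.map c).prod)) ((p.2.1.map c).prod))
  basis_span : ∀ x : carrier, x ∈ Submodule.span ℂ
    (Set.range fun p : {J // J ∈ P} × {J // J ∈ P} =>
      twist (Θ ((p.1.1.map c).prod)) ((p.2.1.map c).prod))
  plus_span : ∀ x ∈ Algebra.adjoin ℂ (c '' {i | i ∈ Λp}),
    x ∈ Submodule.span ℂ (Set.range fun J : {J // J ∈ P} => ((J.1.map c).prod))

attribute [instance] MajoranaSetting.fintypeΛ MajoranaSetting.deceqΛ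
  MajoranaSetting.nring MajoranaSetting.nalg MajoranaSetting.cmpl
  MajoranaSetting.starring MajoranaSetting.starmod

namespace MajoranaSetting

variable (S : MajoranaSetting)

/-- The subalgebra `𝔄₊` generated by the Majoranas on the `+` side. -/
def Aplus : Subalgebra ℂ S.carrier := Algebra.adjoin ℂ (S.c '' {i | i ∈ S.Λp})

/-- The subalgebra `𝔄₋` generated by the Majoranas on the `-` side. -/
def Aminus : Subalgebra ℂ S.carrier := Algebra.adjoin ℂ (S.c '' {i | i ∉ S.Λp})

/-- The monomial `C_𝔍 = c_{i₁} ⋯ c_{i_k}`. -/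
def C (J : List S.Λ) : S.carrier := (J.map S.c).prod

/-- `q_𝔍 = (-1)^{k(k-1)/2}`. -/
def q (J : List S.Λ) : ℂ := (-1 : ℂ) ^ (J.length * (J.length - 1) / 2)

/-- `s_𝔍 = ζ^{k(k-1)/2}`. -/
def sgn (J : List S.Λ) : ℂ := S.ζ ^ (J.length * (J.length - 1) / 2)

/-- The exponential `e^x` in the (finite-dimensional) algebra `𝔄`. -/
def expm (x : S.carrier) : S.carrier := NormedSpace.exp x

/-- The Hamiltonian `H = -∑_{𝔍,𝔍' ∈ 𝒫₊} J_{𝔍𝔍'} Θ(C_𝔍) ∘ C_𝔍'`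
determined by coupling constants `Jc`. -/
def Ham (Jc : List S.Λ → List S.Λ → ℂ) : S.carrier :=
  - ∑ J ∈ S.P, ∑ J' ∈ S.P, Jc J J' • S.twist (S.Θ (S.C J)) (S.C J')

/-- The index type of the basis `{C J : J ∈ 𝒫₊}`. -/
abbrev PIdx := {J : List S.Λ // J ∈ S.P}

/-- The index type `𝒫₊ - {∅}` of couplings across the reflection plane. -/
abbrev PIdx0 := {p : S.PIdx // p.1 ≠ []}

/-- The full matrix of coupling constants. -/
def Jmat (Jc : List S.Λ → List S.Λ → ℂ) : Matrix S.PIdx S.PIdx ℂ :=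
  Matrix.of fun p q => Jc p.1 q.1

/-- The matrix `J⁰` of coupling constants across the reflection plane. -/
def Jmat0 (Jc : List S.Λ → List S.Λ → ℂ) : Matrix S.PIdx0 S.PIdx0 ℂ :=
  Matrix.of fun p q => Jc p.1.1 q.1.1

end MajoranaSetting

/-!
`Θ(C_𝔍) = C_{ϑ𝔍}` lies in `𝔄₋` and `C_𝔍'` in `𝔄₊`, so the twisted product is the ordinary
product `ζ^{|𝔍||𝔍'|} C_{ϑ𝔍} C_𝔍'`. Taking the adjoint reverses both monomials, which costs
`q_𝔍 q_𝔍'`, and swaps the two factors, which costs `(-1)^{k_𝔍 k_𝔍'}`; since `conj ζ = -ζ`,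
conjugating the twist factor produces exactly the same sign `(-1)^{|𝔍||𝔍'|}`, and the two cancel.
-/

section Anticommuting

variable {K A ι : Type*} [CommRing K] [Ring A] [Algebra K A] {c : ι → A}

theorem list_prod_map_mul_of_anticomm (hc : Pairwise fun i j => c i * c j = -(c j * c i))
    {a : ι} {L : List ι} (ha : a ∉ L) :
    (L.map c).prod * c a = ((-1 : K) ^ L.length) • (c a * (L.map c).prod) := by
  induction L with
  | nil => simp
  | cons b L ih =>
    rw [List.mem_cons, not_or] at ha
    have hba : c b * c a = -(c a * c b) := hc (Ne.symm ha.1)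
    rw [List.map_cons, List.prod_cons, mul_assoc, ih ha.2, mul_smul_comm, ← mul_assoc, hba,
      List.length_cons, pow_succ, mul_neg_one, neg_smul, neg_mul, smul_neg, mul_assoc]

theorem list_prod_map_mul_list_prod_map_of_anticomm
    (hc : Pairwise fun i j => c i * c j = -(c j * c i)) {L₁ L₂ : List ι} (h : L₁.Disjoint L₂) :
    (L₁.map c).prod * (L₂.map c).prod
      = ((-1 : K) ^ (L₁.length * L₂.length)) • ((L₂.map c).prod * (L₁.map c).prod) := by
  induction L₂ with
  | nil => simp
  | cons b L₂ ih =>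
    rw [List.disjoint_cons_right] at h
    rw [List.map_cons, List.prod_cons, ← mul_assoc, list_prod_map_mul_of_anticomm (K := K) hc h.1,
      smul_mul_assoc, mul_assoc, ih h.2, mul_smul_comm, smul_smul, ← pow_add, ← mul_assoc,
      List.length_cons, mul_add_one, add_comm]

theorem star_list_prod_map_of_anticomm [StarRing A]
    (hc : Pairwise fun i j => c i * c j = -(c j * c i)) (hstar : ∀ i, star (c i) = c i)
    {L : List ι} (hL : L.Nodup) :
    star (L.map c).prod = ((-1 : K) ^ L.length.choose 2) • (L.map c).prod := by
  induction L with
  | nil => simp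
  | cons a L ih =>
    rw [List.nodup_cons] at hL
    rw [List.map_cons, List.prod_cons, star_mul, ih hL.2, hstar, smul_mul_assoc,
      list_prod_map_mul_of_anticomm (K := K) hc hL.1, smul_smul, List.length_cons,
      Nat.choose_succ_succ', Nat.choose_one_right, pow_add, mul_comm]

theorem map_list_prod_map_of_map_eq_neg {F : Type*} [FunLike F A A] [MonoidHomClass F A A]
    (g : F) (hg : ∀ i, g (c i) = -c i) (L : List ι) :
    g (L.map c).prod = ((-1 : K) ^ L.length) • (L.map c).prod := by
  induction L with
  | nil => simp
  | cons a L ih =>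
    rw [List.map_cons, List.prod_cons, map_mul, hg, ih, List.length_cons, pow_succ, mul_neg_one,
      neg_smul, neg_mul, mul_smul_comm]

end Anticommuting

namespace MajoranaSetting

variable (S : MajoranaSetting)

theorem c_anticomm : Pairwise fun i j => S.c i * S.c j = -(S.c j * S.c i) := fun i j hij =>
  eq_neg_of_add_eq_zero_left (by simpa [hij] using S.clifford i j)

theorem star_C {L : List S.Λ} (hL : L.Nodup) : star (S.C L) = S.q L • S.C L := by
  rw [C, q, ← Nat.choose_two_right]
  exact star_list_prod_map_of_anticomm (K := ℂ) S.c_anticomm S.c_star hL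

theorem C_mem_adjoin {s : Set S.Λ} {L : List S.Λ} (h : ∀ i ∈ L, i ∈ s) :
    S.C L ∈ Algebra.adjoin ℂ (S.c '' s) :=
  (Algebra.adjoin ℂ (S.c '' s)).list_prod_mem (List.forall_mem_map.mpr fun i hi =>
    Algebra.subset_adjoin (Set.mem_image_of_mem _ (h i hi)))

theorem gauge_C (L : List S.Λ) : S.gauge (S.C L) = ((-1 : ℂ) ^ (L.length % 2)) • S.C L := by
  rw [C, map_list_prod_map_of_map_eq_neg (K := ℂ) S.gauge S.gauge_c, neg_one_pow_eq_pow_mod_two]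

theorem Θ_one : S.Θ 1 = 1 :=
  calc S.Θ 1 = S.Θ (S.Θ 1) * S.Θ 1 := by rw [S.Θ_invol, one_mul]
    _ = S.Θ (S.Θ 1 * 1) := by rw [S.Θ_mul]
    _ = 1 := by rw [mul_one, S.Θ_invol]

theorem Θ_C (L : List S.Λ) : S.Θ (S.C L) = S.C (L.map S.ϑ) := by
  have := map_list_prod (⟨⟨S.Θ, S.Θ_one⟩, S.Θ_mul⟩ : S.carrier →* S.carrier) (L.map S.c)
  simpa [C, List.map_map, Function.comp_def, S.Θ_c] using this

theorem twist_of_mem_Aminus_of_mem_Aplus {x y : S.carrier} {a b : ℕ} (ha : a ≤ 1) (hb : b ≤ 1)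
    (hx : x ∈ S.Aminus) (hy : y ∈ S.Aplus) (hgx : S.gauge x = ((-1 : ℂ) ^ a) • x)
    (hgy : S.gauge y = ((-1 : ℂ) ^ b) • y) :
    S.twist x y = S.ζ ^ (a * b) • (x * y) := by
  simpa [← zpow_natCast] using S.twist_spec x 1 1 y a 0 0 b ha zero_le_one zero_le_one hb hx (one_mem _)
    (one_mem _) hy hgx (by simp) (by simp) hgy

theorem twist_Θ_C_C {J J' : List S.Λ} (hJ : ∀ i ∈ J, i ∈ S.Λp) (hJ' : ∀ i ∈ J', i ∈ S.Λp) :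
    S.twist (S.Θ (S.C J)) (S.C J')
      = S.ζ ^ (J.length % 2 * (J'.length % 2)) • (S.C (J.map S.ϑ) * S.C J') := by
  rw [S.Θ_C, ← List.length_map (as := J) S.ϑ]
  refine S.twist_of_mem_Aminus_of_mem_Aplus (by omega) (by omega) (S.C_mem_adjoin ?_)
    (S.C_mem_adjoin hJ') (S.gauge_C _) (S.gauge_C _)
  simpa using fun j hj => (S.ϑ_exch j).mp (hJ j hj)

theorem conj_ζ : starRingEnd ℂ S.ζ = -S.ζ := by
  rcases sq_eq_sq_iff_eq_or_eq_neg.mp (S.ζ_sq.trans Complex.I_sq.symm) with h | h <;> simp [h]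

theorem star_ζ_pow_mul_neg_one_pow (k k' : ℕ) :
    star (S.ζ ^ (k % 2 * (k' % 2))) * (-1) ^ (k * k') = S.ζ ^ (k % 2 * (k' % 2)) := by
  have hpar : (-1 : ℂ) ^ (k % 2 * (k' % 2)) = (-1) ^ (k * k') := by
    rw [neg_one_pow_eq_pow_mod_two, ← Nat.mul_mod, ← neg_one_pow_eq_pow_mod_two]
  rw [star_pow, Complex.star_def, S.conj_ζ, neg_pow, hpar, mul_right_comm, ← pow_add, ← two_mul,
    pow_mul, neg_one_sq, one_pow, one_mul]

end MajoranaSetting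

/-- `(Θ(C_𝔍) ∘ C_𝔍')* = q_𝔍 q_𝔍' Θ(C_𝔍) ∘ C_𝔍'` for `𝔍, 𝔍' ∈ 𝒫₊`. -/
theorem basis_adjoint (S : MajoranaSetting) (J J' : List S.Λ)
    (hJ : J ∈ S.P) (hJ' : J' ∈ S.P) :
    star (S.twist (S.Θ (S.C J)) (S.C J'))
      = (S.q J * S.q J') • S.twist (S.Θ (S.C J)) (S.C J') := by
  have hsub := S.P_sub J hJ
  have hsub' := S.P_sub J' hJ'
  have hdisj : (J.map S.ϑ).Disjoint J' := by
    intro i hi hi'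
    obtain ⟨j, hj, rfl⟩ := List.mem_map.mp hi
    exact (S.ϑ_exch j).mp (hsub j hj) (hsub' _ hi')
  have hswap : S.C J' * S.C (J.map S.ϑ)
      = ((-1 : ℂ) ^ (J'.length * J.length)) • (S.C (J.map S.ϑ) * S.C J') := by
    rw [← List.length_map (as := J) S.ϑ]
    exact list_prod_map_mul_list_prod_map_of_anticomm S.c_anticomm hdisj.symm
  have hqΘ : S.q (J.map S.ϑ) = S.q J := by simp only [MajoranaSetting.q, List.length_map]
  rw [S.twist_Θ_C_C hsub hsub', star_smul, star_mul, S.star_C (S.P_nodup J' hJ'),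
    S.star_C ((S.P_nodup J hJ).map S.ϑ_invol.injective), hqΘ, smul_mul_smul_comm, hswap,
    smul_smul, smul_smul, smul_smul]
  congr 1
  linear_combination S.q J' * S.q J * S.star_ζ_pow_mul_neg_one_pow J.length J'.length
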